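/- For every positive integer s, every positive integer k, and every integer m ≥ s·k, the rooted tree T_2^{(s,k,m)} satisfies the negation of the first-order sentence KEIN_s. -/
import Mathlib


/-! ## Rooted trees -/

/-- A rooted tree structure: a vertex type, a root, and a parent map
(`parent v = none` is intended to hold exactly when `v` is the root). -/
structure RTree where
  V : Type
  root : V
  parent : V → Option V

namespace RTree

/-- Iterate the parent map `n` times. -/
def parentIter (T : RTree) : ℕ → T.V → Option T.V
  | 0, v => some v
  | n + 1, v => (T.parent v).bind (T.parentIter n)

/-- `u` is a descendant of `v` (possibly `u = v`). -/
def IsDesc (T : RTree) (v u : T.V) : Prop :=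
  ∃ n, T.parentIter n u = some v

/-- The structure is a genuine rooted, locally finite tree:
exactly the root has no parent, every vertex reaches the root by iterating
the parent map (connectivity and acyclicity), and every vertex has finitely
many children (local finiteness). -/
def IsTree (T : RTree) : Prop :=
  (∀ v, T.parent v = none ↔ v = T.root) ∧
  (∀ v, ∃ n, T.parentIter n v = some T.root) ∧
  (∀ v, {u | T.parent u = some v}.Finite)

open Classical in
/-- The subtree `T(v)` consisting of `v` and all its descendants, rooted at `v`. -/
noncomputable def subtree (T : RTree) (v : T.V) : RTree where
  V := {u : T.V // T.IsDesc v u}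
  root := ⟨v, 0, rfl⟩
  parent u :=
    if u.1 = v then none
    else (T.parent u.1).bind fun w =>
      if h : T.IsDesc v w then some ⟨w, h⟩ else none

end RTree

/-- An isomorphism of rooted trees: a bijection of vertices mapping root to
root and commuting with the parent maps. -/
structure TreeIso (S T : RTree) where
  toEquiv : S.V ≃ T.V
  map_root : toEquiv S.root = T.root
  map_parent : ∀ v, (S.parent v).map toEquiv = T.parent (toEquiv v)

/-! ## First-order logic of rooted trees -/

/-- Terms: variables (de Bruijn indices) and the constant `R` for the root. -/
inductive FOTerm where
  | var : ℕ → FOTerm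
  | root : FOTerm
deriving DecidableEq

/-- First-order formulas in the language of rooted trees: equality `x = y`,
the parent relation `parentOf t t'` (meaning `π(t') = t`, i.e. `t` is the
parent of `t'`), Boolean connectives, and quantifiers (de Bruijn style). -/
inductive FOFormula where
  | eq : FOTerm → FOTerm → FOFormula
  | parentOf : FOTerm → FOTerm → FOFormula
  | not : FOFormula → FOFormula
  | and : FOFormula → FOFormula → FOFormula
  | or : FOFormula → FOFormula → FOFormula
  | imp : FOFormula → FOFormula → FOFormula
  | all : FOFormula → FOFormula
  | ex : FOFormula → FOFormula
deriving DecidableEq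

namespace FOTerm

def eval (T : RTree) (env : ℕ → T.V) : FOTerm → T.V
  | var n => env n
  | root => T.root

def freeBound : FOTerm → ℕ
  | var n => n + 1
  | root => 0

end FOTerm

/-- Kinds of quantifiers, used to count alternations. -/
inductive QKind where
  | ex | all
deriving DecidableEq

/-- The dual of a quantifier kind. -/
def QKind.dual : QKind → QKind
  | .ex => .all
  | .all => .ex

namespace FOFormula

/-- Satisfaction of a formula in a rooted tree under an environment. -/
def Sat (T : RTree) : FOFormula → (ℕ → T.V) → Prop
  | eq t₁ t₂, env => t₁.eval T env = t₂.eval T env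
  | parentOf t₁ t₂, env => T.parent (t₂.eval T env) = some (t₁.eval T env)
  | not φ, env => ¬ φ.Sat T env
  | and φ ψ, env => φ.Sat T env ∧ ψ.Sat T env
  | or φ ψ, env => φ.Sat T env ∨ ψ.Sat T env
  | imp φ ψ, env => φ.Sat T env → ψ.Sat T env
  | all φ, env => ∀ w : T.V, φ.Sat T (fun n => match n with | 0 => w | Nat.succ k => env k)
  | ex φ, env => ∃ w : T.V, φ.Sat T (fun n => match n with | 0 => w | Nat.succ k => env k)

/-- Quantifier depth: the maximum number of nested quantifiers. -/
def qd : FOFormula → ℕ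
  | eq _ _ => 0
  | parentOf _ _ => 0
  | not φ => φ.qd
  | and φ ψ => max φ.qd ψ.qd
  | or φ ψ => max φ.qd ψ.qd
  | imp φ ψ => max φ.qd ψ.qd
  | all φ => φ.qd + 1
  | ex φ => φ.qd + 1

/-- Auxiliary alternation count: `aqdAux φ pol q` is the maximum number of
alternations between (effectively) existential and universal quantifiers along
a nested quantifier sequence of `φ`, given the current polarity `pol`
(`true` = positive; negations and antecedents of implications flip it, so that
e.g. a `∀` under a negation counts as an `∃`) and the effective kind `q` of
the innermost enclosing quantifier (if any). -/
def aqdAux : FOFormula → Bool → Option QKind → ℕ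
  | eq _ _, _, _ => 0
  | parentOf _ _, _, _ => 0
  | not φ, pol, q => φ.aqdAux (!pol) q
  | and φ ψ, pol, q => max (φ.aqdAux pol q) (ψ.aqdAux pol q)
  | or φ ψ, pol, q => max (φ.aqdAux pol q) (ψ.aqdAux pol q)
  | imp φ ψ, pol, q => max (φ.aqdAux (!pol) q) (ψ.aqdAux pol q)
  | all φ, pol, q =>
      (if q = some (if pol then QKind.ex else QKind.all) then 1 else 0) +
        φ.aqdAux pol (some (if pol then QKind.all else QKind.ex))
  | ex φ, pol, q =>
      (if q = some (if pol then QKind.all else QKind.ex) then 1 else 0) +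
        φ.aqdAux pol (some (if pol then QKind.ex else QKind.all))

/-- The number of alternations of quantifiers of a formula: the maximum number
of switches between (effectively) existential and universal quantifiers in a
nested quantifier sequence.  Purely existential or purely universal formulas
have `aqd = 0`. -/
def aqd (φ : FOFormula) : ℕ := φ.aqdAux true none

/-- A bound on the free variables of a formula: all free de Bruijn indices
are `< freeBound`. -/
def freeBound : FOFormula → ℕ
  | eq t₁ t₂ => max t₁.freeBound t₂.freeBound
  | parentOf t₁ t₂ => max t₁.freeBound t₂.freeBound
  | not φ => φ.freeBound
  | and φ ψ => max φ.freeBound ψ.freeBound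
  | or φ ψ => max φ.freeBound ψ.freeBound
  | imp φ ψ => max φ.freeBound ψ.freeBound
  | all φ => φ.freeBound - 1
  | ex φ => φ.freeBound - 1

/-- A sentence is a formula with no free variables. -/
def IsSentence (φ : FOFormula) : Prop := φ.freeBound = 0

end FOFormula

/-- A (closed) formula holds in a rooted tree. -/
def Models (T : RTree) (φ : FOFormula) : Prop :=
  φ.Sat T (fun _ => T.root)

/-- The formula `P_i(x)`, with free variable `x` being de Bruijn index `0`:
`P_0(x) = ∀ y ¬(π(y) = x)` and `P_{i+1}(x) = ∀ y (π(y) = x → ¬ P_i(y))`. -/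
def Pform : ℕ → FOFormula
  | 0 => .all (.not (.parentOf (.var 1) (.var 0)))
  | i + 1 => .all (.imp (.parentOf (.var 1) (.var 0)) (.not (Pform i)))

/-- The sentence `KEIN_i = P_i(R)`. -/
def KEIN : ℕ → FOFormula
  | 0 => .all (.not (.parentOf .root (.var 0)))
  | i + 1 => .all (.imp (.parentOf .root (.var 0)) (.not (Pform i)))

/-! ## Ehrenfeucht games -/

/-- The winning condition for Duplicator: for all pairs `(x_i, y_i)`, `(x_j, y_j)`
in the list of selected/designated pairs, (Main 1) `π(x_j) = x_i ↔ π(y_j) = y_i`,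
and (Main 2) `x_i = x_j ↔ y_i = y_j`. -/
def GoodPairs (T₁ T₂ : RTree) (ps : List (T₁.V × T₂.V)) : Prop :=
  ∀ p ∈ ps, ∀ q ∈ ps,
    (T₁.parent p.1 = some q.1 ↔ T₂.parent p.2 = some q.2) ∧
    (p.1 = q.1 ↔ p.2 = q.2)

/-- Duplicator wins the scheduled Ehrenfeucht game on `T₁, T₂` in which Spoiler
must play his moves in consecutive batches, the batch sizes given by the list
`sched`, switching trees after each batch; `side = true` means Spoiler currently
plays on `T₁` (Duplicator answering on `T₂`), `side = false` means Spoiler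
currently plays on `T₂`.  The list `ps` records the pairs selected so far
(including designated pairs and the pair of roots); Duplicator wins when the
final configuration satisfies `GoodPairs`. -/
def DupWinsSched (T₁ T₂ : RTree) : List ℕ → Bool → List (T₁.V × T₂.V) → Prop
  | [], _, ps => GoodPairs T₁ T₂ ps
  | 0 :: rest, side, ps => DupWinsSched T₁ T₂ rest (!side) ps
  | (n + 1) :: rest, side, ps =>
      if side then
        ∀ x : T₁.V, ∃ y : T₂.V, DupWinsSched T₁ T₂ (n :: rest) side ((x, y) :: ps)
      else
        ∀ y : T₂.V, ∃ x : T₁.V, DupWinsSched T₁ T₂ (n :: rest) side ((x, y) :: ps)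
termination_by sched _ _ => (sched.length, sched.sum)
decreasing_by
  all_goals
    first
      | exact Prod.Lex.left _ _ (Nat.lt_succ_self _)
      | exact Prod.Lex.right _ (by simp [List.sum_cons])

/-- The cost (in switches) for Spoiler of playing on side `side` when his
previous move (if any) was on side `last`. -/
def switchCost (last : Option Bool) (side : Bool) : ℕ :=
  match last with
  | none => 0
  | some b => if b = side then 0 else 1

/-- Duplicator wins the Ehrenfeucht game `EHR` with `rounds` remaining rounds,
`sw` remaining switches allowed to Spoiler, `last` the side on which Spoiler
made his previous move (if any), and `ps` the pairs selected so far.  In each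
round Spoiler picks a side (paying a switch if he changes trees, which he may
do only if he has switches left) and a vertex in that tree, and Duplicator
answers in the other tree. -/
def DupWinsEHRAux (T₁ T₂ : RTree) :
    ℕ → ℕ → Option Bool → List (T₁.V × T₂.V) → Prop
  | 0, _, _, ps => GoodPairs T₁ T₂ ps
  | r + 1, sw, last, ps =>
      ∀ side : Bool, switchCost last side ≤ sw →
        if side then
          ∀ x : T₁.V, ∃ y : T₂.V,
            DupWinsEHRAux T₁ T₂ r (sw - switchCost last side) (some side) ((x, y) :: ps)
        else
          ∀ y : T₂.V, ∃ x : T₁.V,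
            DupWinsEHRAux T₁ T₂ r (sw - switchCost last side) (some side) ((x, y) :: ps)

/-- Duplicator wins the game `EHR[T₁, T₂, s, r]`: `r` rounds, Spoiler may start
on either tree and make at most `s` switches. -/
def DupWinsEHR (T₁ T₂ : RTree) (s r : ℕ) : Prop :=
  DupWinsEHRAux T₁ T₂ r s none [(T₁.root, T₂.root)]

/-! ## The trees `T₁^{(s,k,m)}` and `T₂^{(s,k,m)}` -/

/-- The one-vertex rooted tree. -/
def single : RTree where
  V := PUnit
  root := PUnit.unit
  parent := fun _ => none

/-- Hang the trees `f 0, …, f (n-1)` from a new root: the root of each `f i`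
becomes a child of the new root. -/
def hang (n : ℕ) (f : Fin n → RTree) : RTree where
  V := Unit ⊕ (Σ i : Fin n, (f i).V)
  root := Sum.inl ()
  parent := fun x =>
    match x with
    | Sum.inl _ => none
    | Sum.inr ⟨i, w⟩ =>
      match (f i).parent w with
      | none => some (Sum.inl ())
      | some w' => some (Sum.inr ⟨i, w'⟩)

/-- The pair of trees `(T₁^{(s,k,m)}, T₂^{(s,k,m)})`, indexed by `s` (the
parameter `k` plays no role in the construction).  Conventions for `s = 0`:
`T₁^{(0)}` is a single vertex and `T₂^{(0)}` is a star of `m` childless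
children.  For `s ≥ 1`: in `T₁^{(s+1)}` the root has `m+1` children, from each
of which hangs a copy of `T₂^{(s)}`; in `T₂^{(s+1)}` the root has `m+1`
children, from `m` of which hangs a copy of `T₂^{(s)}` and from the remaining
one hangs a copy of `T₁^{(s)}`. -/
def TreePair (m : ℕ) : ℕ → RTree × RTree
  | 0 => (single, hang m fun _ => single)
  | s + 1 =>
      (hang (m + 1) fun _ => (TreePair m s).2,
       hang (m + 1) fun i => if i.1 = m then (TreePair m s).1 else (TreePair m s).2)

/-- The tree `T₁^{(s,k,m)}`. -/
def Tree1 (s k m : ℕ) : RTree := (TreePair m s).1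

/-- The tree `T₂^{(s,k,m)}`. -/
def Tree2 (s k m : ℕ) : RTree := (TreePair m s).2

/-! ## Auxiliary development -/

/-- Semantic version of `Pform`. -/
def Pp (T : RTree) : ℕ → T.V → Prop
  | 0, v => ∀ w, T.parent w ≠ some v
  | i + 1, v => ∀ w, T.parent w = some v → ¬ Pp T i w

lemma sat_pform (T : RTree) : ∀ (i : ℕ) (env : ℕ → T.V),
    (Pform i).Sat T env ↔ Pp T i (env 0) := by
  intro i
  induction i with
  | zero =>
    intro env
    simp [Pform, FOFormula.Sat, FOTerm.eval, Pp]
  | succ i ih =>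
    intro env
    simp only [Pform, FOFormula.Sat, FOTerm.eval, Pp]
    constructor
    · intro h w hw
      have := h w hw
      rw [ih] at this
      exact this
    · intro h w hw
      rw [ih]
      exact h w hw

/-- In a `hang` tree, the parentless vertex is exactly the root. -/
lemma hang_parent_eq_none (n : ℕ) (f : Fin n → RTree) (u : (hang n f).V) :
    (hang n f).parent u = none ↔ u = Sum.inl () := by
  cases u with
  | inl u => simp [hang]
  | inr p =>
    obtain ⟨j, w⟩ := p
    simp only [hang]
    cases h : (f j).parent w <;> simp

/-- Children of the root of `hang n f` are embedded parentless vertices. -/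
lemma hang_parent_eq_root (n : ℕ) (f : Fin n → RTree) (u : (hang n f).V) :
    (hang n f).parent u = some (Sum.inl ()) ↔
      ∃ (j : Fin n) (v : (f j).V), u = Sum.inr ⟨j, v⟩ ∧ (f j).parent v = none := by
  cases u with
  | inl u => simp [hang]
  | inr p =>
    obtain ⟨j, w⟩ := p
    simp only [hang]
    cases h : (f j).parent w with
    | none =>
      simp only [true_iff]
      exact ⟨j, w, rfl, h⟩
    | some w' =>
      constructor
      · intro hh; exact absurd (Option.some.inj hh) (by simp)
      · rintro ⟨j', v, hv, hv'⟩
        have h1 : j' = j := by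
          have := (Sum.inr.inj hv).symm
          exact (Sigma.mk.inj_iff.mp this).1
        subst h1
        have h2 : v = w := by
          have := (Sum.inr.inj hv).symm
          exact eq_of_heq (Sigma.mk.inj_iff.mp this).2
        subst h2
        rw [h] at hv'; exact absurd hv' (by simp)

/-- Inversion: parents inside a hung copy. -/
lemma hang_parent_eq_inr (n : ℕ) (f : Fin n → RTree) (u : (hang n f).V)
    (j : Fin n) (w : (f j).V) :
    (hang n f).parent u = some (Sum.inr ⟨j, w⟩) ↔
      ∃ v : (f j).V, u = Sum.inr ⟨j, v⟩ ∧ (f j).parent v = some w := by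
  constructor
  · intro hu
    cases u with
    | inl u => simp [hang] at hu
    | inr p =>
      obtain ⟨j', v⟩ := p
      simp only [hang] at hu
      cases h : (f j').parent v with
      | none => rw [h] at hu; exact absurd (Option.some.inj hu) (by simp)
      | some v' =>
        rw [h] at hu
        have := Sum.inr.inj (Option.some.inj hu)
        have h1 : j' = j := (Sigma.mk.inj_iff.mp this).1
        subst h1
        have h2 : v' = w := eq_of_heq (Sigma.mk.inj_iff.mp this).2
        subst h2
        exact ⟨v, rfl, h⟩
  · rintro ⟨v, rfl, hv⟩
    simp [hang, hv]

/-- Satisfaction of `Pp` inside a hung copy matches satisfaction in the copy. -/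
lemma embP (n : ℕ) (f : Fin n → RTree) :
    ∀ (i : ℕ) (j : Fin n) (w : (f j).V),
      Pp (hang n f) i (Sum.inr ⟨j, w⟩) ↔ Pp (f j) i w := by
  intro i
  induction i with
  | zero =>
    intro j w
    constructor
    · intro h v hv
      exact h (Sum.inr ⟨j, v⟩) (by simp [hang, hv])
    · intro h u hu
      obtain ⟨v, rfl, hv⟩ := (hang_parent_eq_inr n f u j w).mp hu
      exact h v hv
  | succ i ih =>
    intro j w
    constructor
    · intro h v hv hP
      exact h (Sum.inr ⟨j, v⟩) (by simp [hang, hv]) ((ih j v).mpr hP)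
    · intro h u hu hP
      obtain ⟨v, rfl, hv⟩ := (hang_parent_eq_inr n f u j w).mp hu
      exact h v hv ((ih j v).mp hP)

/-- Each tree in `TreePair` has parentless root. -/
lemma treePair_root_parent (m s : ℕ) :
    (TreePair m s).1.parent (TreePair m s).1.root = none ∧
    (TreePair m s).2.parent (TreePair m s).2.root = none := by
  cases s <;> exact ⟨rfl, rfl⟩

/-- The key mutual induction. -/
lemma key (m : ℕ) (hm : 1 ≤ m) :
    ∀ s : ℕ, Pp (TreePair m s).1 s (TreePair m s).1.root ∧
      ¬ Pp (TreePair m s).2 s (TreePair m s).2.root := by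
  intro s
  induction s with
  | zero =>
    constructor
    · intro w hw; simp [TreePair, single] at hw
    · intro h
      exact h (Sum.inr ⟨⟨0, hm⟩, PUnit.unit⟩) (by simp [TreePair, hang, single])
  | succ s ih =>
    obtain ⟨ih1, ih2⟩ := ih
    constructor
    · -- Pp (T1^{s+1}) (s+1) root
      intro u hu hP
      obtain ⟨j, v, rfl, hv⟩ :=
        (hang_parent_eq_root (m + 1) _ u).mp hu
      -- f j = (TreePair m s).2, which is a hang; v parentless ⇒ v = root
      have hroot : v = (TreePair m s).2.root := by
        cases s with
        | zero =>
          have := (hang_parent_eq_none m (fun _ => single) v).mp hv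
          exact this
        | succ t =>
          exact (hang_parent_eq_none (m + 1) _ v).mp hv
      subst hroot
      exact ih2 ((embP (m + 1) (fun _ => (TreePair m s).2) s j _).mp hP)
    · -- ¬ Pp (T2^{s+1}) (s+1) root
      intro h
      set f : Fin (m + 1) → RTree :=
        fun i => if i.1 = m then (TreePair m s).1 else (TreePair m s).2 with hf
      have hjm : f ⟨m, Nat.lt_succ_self m⟩ = (TreePair m s).1 := if_pos rfl
      -- transport the root of T1^s into (f jm).V
      have : ∃ r : (f ⟨m, Nat.lt_succ_self m⟩).V,
          (f ⟨m, Nat.lt_succ_self m⟩).parent r = none ∧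
          Pp (f ⟨m, Nat.lt_succ_self m⟩) s r := by
        rw [hjm]
        exact ⟨(TreePair m s).1.root, (treePair_root_parent m s).1, ih1⟩
      obtain ⟨r, hr1, hr2⟩ := this
      refine h (Sum.inr ⟨⟨m, Nat.lt_succ_self m⟩, r⟩) ?_ ?_
      · exact (hang_parent_eq_root (m + 1) f _).mpr ⟨_, r, rfl, hr1⟩
      · exact (embP (m + 1) f s _ r).mpr hr2

/-- For every positive `s`, positive `k` and `m ≥ s·k`, the tree
`T₂^{(s,k,m)}` satisfies `¬ KEIN_s`. -/
theorem tree2_models_not_kein (s k m : ℕ) (hs : 0 < s) (hk : 0 < k) (hm : s * k ≤ m) :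
    Models (Tree2 s k m) (FOFormula.not (KEIN s)) := by
  obtain ⟨i, rfl⟩ : ∃ i, s = i + 1 := ⟨s - 1, (Nat.succ_pred_eq_of_pos hs).symm⟩
  have hm1 : 1 ≤ m := le_trans (Nat.mul_pos hs hk) hm
  set f : Fin (m + 1) → RTree :=
    fun j => if j.1 = m then (TreePair m i).1 else (TreePair m i).2 with hf
  have hjm : f ⟨m, Nat.lt_succ_self m⟩ = (TreePair m i).1 := if_pos rfl
  have hw : ∃ r : (f ⟨m, Nat.lt_succ_self m⟩).V,
      (f ⟨m, Nat.lt_succ_self m⟩).parent r = none ∧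
      Pp (f ⟨m, Nat.lt_succ_self m⟩) i r := by
    rw [hjm]
    exact ⟨(TreePair m i).1.root, (treePair_root_parent m i).1, (key m hm1 i).1⟩
  obtain ⟨r, hr1, hr2⟩ := hw
  intro hK
  have hpar : (Tree2 (i + 1) k m).parent (Sum.inr ⟨⟨m, Nat.lt_succ_self m⟩, r⟩) =
      some (Tree2 (i + 1) k m).root :=
    (hang_parent_eq_root (m + 1) f _).mpr ⟨_, r, rfl, hr1⟩
  exact hK (Sum.inr ⟨⟨m, Nat.lt_succ_self m⟩, r⟩) hpar
    ((sat_pform (Tree2 (i + 1) k m) i _).mpr ((embP (m + 1) f i _ r).mpr hr2))
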